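/- arXiv:0810.2311 — 3 statements merged into one kernel-verified Lean document; each statement's English description precedes it below -/
import Mathlib

section
/- If a symmetric non-negative matrix A ∈ ℝ^{N×N} is diagonally dominant (a_{ii} ≥ Σ_{j≠i} a_{ij} for all i), then A is completely positive, i.e., there exists a non-negative matrix B ∈ ℝ₊^{N×k} for some k with A = B·Bᵀ. -/
/-!
Split `A` into a non-negative diagonal part, holding the slack `a_ii - ∑_{j ≠ i} a_ij` of the
diagonal dominance, and, for every ordered pair `p ≠ q`, the rank-one matrix
`(a_pq / 2) (e_p + e_q)(e_p + e_q)ᵀ`. Each summand is `B Bᵀ` for a non-negative `B`, and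
completely positive matrices are closed under sums (concatenate the factors column-wise).
-/

open Finset

namespace Matrix

variable {n : Type*}

def IsCompletelyPositive (A : Matrix n n ℝ) : Prop :=
  ∃ (k : ℕ) (B : Matrix n (Fin k) ℝ), (∀ i j, 0 ≤ B i j) ∧ A = B * Bᵀ

theorem isCompletelyPositive_mul_transpose_self {κ : Type*} [Fintype κ] {B : Matrix n κ ℝ}
    (hB : ∀ i j, 0 ≤ B i j) : (B * Bᵀ).IsCompletelyPositive :=
  ⟨Fintype.card κ, B.submatrix id (Fintype.equivFin κ).symm, fun _ _ => hB _ _, by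
    rw [transpose_submatrix, submatrix_mul_equiv, submatrix_id_id]⟩

namespace IsCompletelyPositive

theorem zero : (0 : Matrix n n ℝ).IsCompletelyPositive :=
  ⟨0, 0, fun _ j => j.elim0, by simp⟩

theorem add {A A' : Matrix n n ℝ} (hA : A.IsCompletelyPositive)
    (hA' : A'.IsCompletelyPositive) : (A + A').IsCompletelyPositive := by
  obtain ⟨k, B, hB, rfl⟩ := hA
  obtain ⟨k', B', hB', rfl⟩ := hA'
  rw [← fromCols_mul_fromRows, ← transpose_fromCols]
  refine isCompletelyPositive_mul_transpose_self ?_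
  rintro i (j | j)
  exacts [hB i j, hB' i j]

theorem sum {ι : Type*} (s : Finset ι) {A : ι → Matrix n n ℝ}
    (hA : ∀ i ∈ s, (A i).IsCompletelyPositive) : (∑ i ∈ s, A i).IsCompletelyPositive :=
  Finset.sum_induction A IsCompletelyPositive (fun _ _ => add) zero hA

theorem smul {A : Matrix n n ℝ} (hA : A.IsCompletelyPositive) {c : ℝ} (hc : 0 ≤ c) :
    (c • A).IsCompletelyPositive := by
  obtain ⟨k, B, hB, rfl⟩ := hA
  refine ⟨k, √c • B, fun i j => mul_nonneg (Real.sqrt_nonneg c) (hB i j), ?_⟩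
  rw [transpose_smul, Matrix.smul_mul, Matrix.mul_smul, smul_smul, Real.mul_self_sqrt hc]

end IsCompletelyPositive

theorem isCompletelyPositive_vecMulVec_self {v : n → ℝ} (hv : 0 ≤ v) :
    (vecMulVec v v).IsCompletelyPositive := by
  rw [vecMulVec_eq Unit, ← transpose_replicateCol]
  exact isCompletelyPositive_mul_transpose_self fun i _ => hv i

variable [Fintype n] [DecidableEq n]

theorem isCompletelyPositive_diagonal {d : n → ℝ} (hd : 0 ≤ d) :
    (diagonal d).IsCompletelyPositive := by
  have hsqrt : diagonal d = diagonal (fun i => √(d i)) * (diagonal fun i => √(d i))ᵀ := by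
    rw [diagonal_transpose, diagonal_mul_diagonal]
    exact congrArg diagonal (funext fun i => (Real.mul_self_sqrt (hd i)).symm)
  rw [hsqrt]
  exact isCompletelyPositive_mul_transpose_self fun i j => by
    by_cases h : i = j <;> simp [h]

theorem sum_smul_vecMulVec_single_add_single {R : Type*} [CommSemiring R] (c : Matrix n n R) :
    ∑ p, ∑ q, c p q • vecMulVec (Pi.single p 1 + Pi.single q 1) (Pi.single p 1 + Pi.single q 1)
      = diagonal (fun i => ∑ q, c i q + ∑ p, c p i) + c + cᵀ := by
  ext i j
  rcases eq_or_ne i j with rfl | hij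
  · simp [vecMulVec_apply, Pi.single_apply, sum_apply, mul_add, sum_add_distrib]
    ring
  · simp [vecMulVec_apply, Pi.single_apply, sum_apply, mul_add, sum_add_distrib, hij, add_comm]

theorem IsSymm.eq_diagonal_add_sum_smul_vecMulVec {R : Type*} [Field R] [NeZero (2 : R)]
    {A : Matrix n n R} (hA : A.IsSymm) :
    A = diagonal (fun i => A i i - ∑ j ∈ univ.erase i, A i j) +
      ∑ p, ∑ q, (if p = q then 0 else A p q / 2) •
        vecMulVec (Pi.single p 1 + Pi.single q 1) (Pi.single p 1 + Pi.single q 1) := by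
  have h := sum_smul_vecMulVec_single_add_single (of fun p q : n => if p = q then 0 else A p q / 2)
  simp only [of_apply] at h
  rw [h]
  ext i j
  rcases eq_or_ne i j with rfl | hij
  · simp [hA.apply, sum_ite, filter_ne, filter_ne', ← sum_div]
  · simp [hij, hij.symm, hA.apply i j]

end Matrix

open Matrix

open Finset in
/-- A symmetric non-negative diagonally dominant matrix is completely positive. -/
theorem diagonally_dominant_is_completely_positive (N : ℕ)
    (A : Matrix (Fin N) (Fin N) ℝ) (hsymm : A.IsSymm)
    (hnonneg : ∀ i j, 0 ≤ A i j)
    (hdd : ∀ i, ∑ j ∈ Finset.univ.erase i, A i j ≤ A i i) :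
    ∃ (k : ℕ) (B : Matrix (Fin N) (Fin k) ℝ),
      (∀ i j, 0 ≤ B i j) ∧ A = B * B.transpose := by
  show A.IsCompletelyPositive
  rw [hsymm.eq_diagonal_add_sum_smul_vecMulVec]
  refine (isCompletelyPositive_diagonal fun i => sub_nonneg.2 (hdd i)).add
    (IsCompletelyPositive.sum _ fun p _ => IsCompletelyPositive.sum _ fun q _ =>
      (isCompletelyPositive_vecMulVec_self ?_).smul ?_)
  · exact add_nonneg (Pi.single_nonneg.2 zero_le_one) (Pi.single_nonneg.2 zero_le_one)
  · split_ifs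
    exacts [le_rfl, div_nonneg (hnonneg p q) zero_le_two]
end

section
/- If the 3×3 matrix [[1, w, h],[w, t₁, v],[h, v, t₂]] is positive semidefinite with t₁ = w² and t₂ = h², then v = w·h. -/
/-!
For `x = e₁ - w e₀` the quadratic form of the matrix is `t₁ - w² = 0`. A positive semidefinite
matrix annihilates every vector on which its quadratic form vanishes, and the last coordinate of
`A x = 0` reads `v - w h = 0`.
-/

open Matrix

theorem Matrix.PosSemidef.apply_eq_mul_of_apply_self_eq_sq {ι : Type*} [Fintype ι]
    [DecidableEq ι] {A : Matrix ι ι ℝ} (hA : A.PosSemidef) {i j : ι} (hi : A i i = 1)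
    (hj : A j j = A i j ^ 2) (k : ι) :
    A j k = A i j * A i k := by
  have hsymm (a b : ι) : A a b = A b a := by simpa using hA.isHermitian.apply b a
  set x : ι → ℝ := Pi.single j 1 - A i j • Pi.single i 1
  have hform : star x ⬝ᵥ A *ᵥ x = 0 := by
    simp only [x, star_trivial, mulVec_sub, mulVec_single, MulOpposite.op_one, one_smul,
      mulVec_smul, dotProduct_sub, sub_dotProduct, single_dotProduct, col_apply, hj, one_mul,
      smul_dotProduct, smul_eq_mul, dotProduct_smul, hsymm j i, hi, mul_one]
    ring
  have hkernel := congrFun ((hA.dotProduct_mulVec_zero_iff x).mp hform) k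
  simp only [x, mulVec_sub, mulVec_single, MulOpposite.op_one, one_smul, mulVec_smul,
    Pi.sub_apply, col_apply, Pi.smul_apply, smul_eq_mul, Pi.zero_apply] at hkernel
  rw [hsymm j k, hsymm i k]
  linarith

theorem psd_equality_case_general (w h v t₁ t₂ : ℝ)
    (hpsd : (Matrix.of ![![1, w, h], ![w, t₁, v], ![h, v, t₂]] :
      Matrix (Fin 3) (Fin 3) ℝ).PosSemidef)
    (ht₁ : t₁ = w ^ 2) :
    v = w * h := by
  subst ht₁
  simpa using hpsd.apply_eq_mul_of_apply_self_eq_sq (i := 0) (j := 1) rfl rfl 2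

/-- If `[[1,w,h],[w,w²,v],[h,v,h²]]` is PSD then `v = w h`. -/
theorem psd_equality_case (w h v t₁ t₂ : ℝ)
    (hpsd : (Matrix.of ![![1, w, h], ![w, t₁, v], ![h, v, t₂]] :
      Matrix (Fin 3) (Fin 3) ℝ).PosSemidef)
    (ht₁ : t₁ = w ^ 2) (ht₂ : t₂ = h ^ 2) :
    v = w * h :=
  psd_equality_case_general w h v t₁ t₂ hpsd ht₁
end

section
/- The function g(x̃, ỹ) = Σ_i Σ_j c_{ij} · (Σ_l exp(x̃_{il} + ỹ_{lj})) with c_{ij} ≥ 0 is convex in (x̃, ỹ), and hence ‖V − WH‖₂² under the substitution W_{il} = exp(x̃_{il}), H_{lj} = exp(ỹ_{lj}) is a difference of two convex functions f − g plus a constant. -/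
/-!
Each `exp (x̃ᵢₗ + ỹₗⱼ)` is the exponential of a linear functional of `(x̃, ỹ)`, hence convex, and
`g` is a nonnegative combination of such terms. The decomposition of `‖V - WH‖₂²` is
`(a - b)² = a² + b² - 2ab` summed over the entries.
-/

open Finset

theorem ConvexOn.sum {𝕜 E β ι : Type*} [Semiring 𝕜] [PartialOrder 𝕜] [AddCommMonoid E]
    [AddCommMonoid β] [PartialOrder β] [IsOrderedAddMonoid β] [SMul 𝕜 E] [Module 𝕜 β]
    {s : Set E} {t : Finset ι} {f : ι → E → β} (hs : Convex 𝕜 s)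
    (h : ∀ i ∈ t, ConvexOn 𝕜 s (f i)) : ConvexOn 𝕜 s fun x => ∑ i ∈ t, f i x := by
  simpa only [← Finset.sum_apply] using
    Finset.sum_induction f (ConvexOn 𝕜 s) (fun _ _ => ConvexOn.add) (convexOn_const 0 hs) h

theorem Finset.sum_sub_sq_eq {ι R : Type*} [CommRing R] (s : Finset ι) (a b : ι → R) :
    ∑ i ∈ s, (a i - b i) ^ 2 =
      ∑ i ∈ s, a i ^ 2 + ∑ i ∈ s, b i ^ 2 - 2 * ∑ i ∈ s, a i * b i := by
  simp only [sub_sq, sum_add_distrib, sum_sub_distrib, mul_sum, mul_assoc]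
  abel

section ExpFactorization

variable {ι κ μ : Type*}

theorem convexOn_exp_add_entry (i : ι) (l : κ) (j : μ) :
    ConvexOn ℝ Set.univ fun p : Matrix ι κ ℝ × Matrix κ μ ℝ => Real.exp (p.1 i l + p.2 l j) :=
  convexOn_exp.comp_linearMap <|
    (Matrix.entryLinearMap ℝ ℝ i l).comp (LinearMap.fst ℝ _ (Matrix κ μ ℝ)) +
      (Matrix.entryLinearMap ℝ ℝ l j).comp (LinearMap.snd ℝ (Matrix ι κ ℝ) _)

theorem convexOn_sum_mul_sum_exp_add [Fintype ι] [Fintype κ] [Fintype μ] (c : Matrix ι μ ℝ)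
    (hc : ∀ i j, 0 ≤ c i j) :
    ConvexOn ℝ Set.univ fun p : Matrix ι κ ℝ × Matrix κ μ ℝ =>
      ∑ i, ∑ j, c i j * ∑ l, Real.exp (p.1 i l + p.2 l j) :=
  ConvexOn.sum convex_univ fun i _ => ConvexOn.sum convex_univ fun j _ =>
    (ConvexOn.sum convex_univ fun l _ => convexOn_exp_add_entry i l j).smul (hc i j)

end ExpFactorization

/-- `g(x̃, ỹ) = Σᵢⱼ cᵢⱼ Σₗ exp(x̃ᵢₗ + ỹₗⱼ)` with `cᵢⱼ ≥ 0` is convex, and the NMF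
objective under the exponential substitution is a constant plus `f - g`. -/
theorem posynomial_linear_convex_and_dc (N m k : ℕ)
    (V : Matrix (Fin N) (Fin m) ℝ) (hV : ∀ i j, 0 ≤ V i j) :
    ConvexOn ℝ Set.univ
      (fun p : Matrix (Fin N) (Fin k) ℝ × Matrix (Fin k) (Fin m) ℝ =>
        2 * ∑ i, ∑ j, V i j * (∑ l, Real.exp (p.1 i l + p.2 l j))) ∧
    (∀ p : Matrix (Fin N) (Fin k) ℝ × Matrix (Fin k) (Fin m) ℝ,
      ∑ i, ∑ j, (V i j - ∑ l, Real.exp (p.1 i l + p.2 l j)) ^ 2 =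
        (∑ i, ∑ j, (V i j) ^ 2) +
        (∑ i, ∑ j, (∑ l, Real.exp (p.1 i l + p.2 l j)) ^ 2) -
        2 * ∑ i, ∑ j, V i j * (∑ l, Real.exp (p.1 i l + p.2 l j))) := by
  refine ⟨(convexOn_sum_mul_sum_exp_add V hV).smul zero_le_two, fun p => ?_⟩
  simp only [← Fintype.sum_prod_type']
  exact Finset.sum_sub_sq_eq _ _ _
end
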